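/- For α ≥ κ ≥ 0 with α > κ, and all x, μ ∈ ℝ: ((α²−κ²)/(2α)) · exp(−α|x−μ| + κ(x−μ)) = ∫₀^∞ φ(x; μ + κν, ν) · ((α²−κ²)/2) · exp(−((α²−κ²)/2)·ν) dν, where φ(x; m, v) = (1/√(2πv)) exp(−(x−m)²/(2v)) is the normal density with mean m and variance v. -/

import Mathlib

/-!
Completing the square in the exponent, the mixture integrand is `exp (κ y) / √(2π)` times
`ν^(-1/2) exp (-y² / (2ν) - α² ν / 2)` with `y = x - μ`, so the claim reduces to
`∫₀^∞ ν^(-1/2) exp (-a² / (2ν) - b² ν / 2) dν = √(2π) / b · exp (-a b)`.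
After `ν = u²` and a second completion of the square this is the Cauchy–Schlömilch identity
`∫₀^∞ f (b u - a / u) du = (2b)⁻¹ ∫ f` for the even Gaussian `f`. That identity holds
because `u ↦ a / (b u)` maps `b u - a / u` to its negative, so for even `f` the weight `b`
may be traded for `a / u²`; with the weight `b + a / u² = d/du (b u - a / u)` the
substitution `w = b u - a / u` sweeps out `ℝ` exactly once.
-/

open MeasureTheory Real Set

/-- Normal density with mean `m` and variance `v`. -/
noncomputable def normalPdf (x m v : ℝ) : ℝ :=
  (1 / Real.sqrt (2 * π * v)) * Real.exp (-(x - m) ^ 2 / (2 * v))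

section ChangeOfVariables

variable {E : Type*} [NormedAddCommGroup E] [NormedSpace ℝ E]

theorem Function.Even.setIntegral_Ioi_zero {f : ℝ → E} (heven : f.Even) (hf : Integrable f) :
    ∫ x in Ioi 0, f x = (2 : ℝ)⁻¹ • ∫ x, f x := by
  have hIic : ∫ x in Iic 0, f x = ∫ x in Ioi 0, f x := by
    simpa [heven _] using (integral_comp_neg_Ioi 0 f).symm
  rw [← intervalIntegral.integral_Iic_add_Ioi hf.integrableOn hf.integrableOn, hIic,
    ← two_smul ℝ, smul_smul]
  norm_num

theorem image_div_Ioi_zero {c : ℝ} (hc : 0 < c) : (fun u => c / u) '' Ioi 0 = Ioi 0 := by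
  ext w
  simp only [mem_image, mem_Ioi]
  constructor
  · rintro ⟨u, hu, rfl⟩
    positivity
  · exact fun hw => ⟨c / w, by positivity, by field_simp⟩

theorem injOn_div_Ioi_zero {c : ℝ} (hc : 0 < c) : InjOn (fun u => c / u) (Ioi 0) := by
  intro u hu v hv h
  simp only [mem_Ioi] at hu hv
  field_simp at h
  exact h.symm

theorem hasDerivWithinAt_div_Ioi_zero (c : ℝ) :
    ∀ u ∈ Ioi (0 : ℝ), HasDerivWithinAt (fun u => c / u) (-(c / u ^ 2)) (Ioi 0) u := by
  intro u hu
  simpa [div_eq_mul_inv] using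
    ((hasDerivAt_inv (ne_of_gt hu)).const_mul c).hasDerivWithinAt

theorem integral_Ioi_comp_div (g : ℝ → E) {c : ℝ} (hc : 0 < c) :
    ∫ u in Ioi 0, (c / u ^ 2) • g (c / u) = ∫ u in Ioi 0, g u := by
  conv_rhs => rw [← image_div_Ioi_zero hc]
  rw [integral_image_eq_integral_abs_deriv_smul measurableSet_Ioi
    (hasDerivWithinAt_div_Ioi_zero c) (injOn_div_Ioi_zero hc) g]
  refine setIntegral_congr_fun measurableSet_Ioi fun u hu => ?_
  rw [abs_neg, abs_of_pos (by have := mem_Ioi.mp hu; positivity)]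

theorem integrableOn_Ioi_comp_div_iff (g : ℝ → E) {c : ℝ} (hc : 0 < c) :
    IntegrableOn (fun u => (c / u ^ 2) • g (c / u)) (Ioi 0) ↔ IntegrableOn g (Ioi 0) := by
  conv_rhs => rw [← image_div_Ioi_zero hc]
  rw [integrableOn_image_iff_integrableOn_abs_deriv_smul measurableSet_Ioi
    (hasDerivWithinAt_div_Ioi_zero c) (injOn_div_Ioi_zero hc) g]
  refine integrableOn_congr_fun (fun u hu => ?_) measurableSet_Ioi
  rw [abs_neg, abs_of_pos (by have := mem_Ioi.mp hu; positivity)]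

theorem hasDerivWithinAt_mul_sub_div (a b : ℝ) :
    ∀ u ∈ Ioi (0 : ℝ),
      HasDerivWithinAt (fun u => b * u - a / u) (b + a / u ^ 2) (Ioi 0) u := by
  intro u hu
  have h := ((hasDerivAt_id' u).const_mul b).sub ((hasDerivAt_inv (ne_of_gt hu)).const_mul a)
  rw [show (fun u => b * u - a / u) = (fun y => b * y) - fun y => a * y⁻¹ by
    funext v; simp [div_eq_mul_inv]]
  exact (h.congr_deriv (by ring)).hasDerivWithinAt

theorem strictMonoOn_mul_sub_div {a b : ℝ} (ha : 0 ≤ a) (hb : 0 < b) :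
    StrictMonoOn (fun u => b * u - a / u) (Ioi 0) := by
  intro u hu v hv huv
  have : a / v ≤ a / u := div_le_div_of_nonneg_left ha hu huv.le
  have : b * u < b * v := mul_lt_mul_of_pos_left huv hb
  dsimp only
  linarith

theorem image_mul_sub_div_Ioi_zero {a b : ℝ} (ha : 0 < a) (hb : 0 < b) :
    (fun u => b * u - a / u) '' Ioi 0 = univ := by
  refine eq_univ_of_forall fun w => ?_
  -- the positive root of `b u ^ 2 - w u - a`
  set s := √(w ^ 2 + 4 * a * b)
  have hs : s ^ 2 = w ^ 2 + 4 * a * b := sq_sqrt (by positivity)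
  have hws : 0 < w + s := by nlinarith [sqrt_nonneg (w ^ 2 + 4 * a * b), sq_abs w, abs_nonneg w]
  refine ⟨(w + s) / (2 * b), div_pos hws (by positivity), ?_⟩
  field_simp
  nlinarith

theorem abs_deriv_mul_sub_div_smul {a b : ℝ} (ha : 0 ≤ a) (hb : 0 < b) (f : ℝ → E) :
    ∀ u ∈ Ioi (0 : ℝ),
      |b + a / u ^ 2| • f (b * u - a / u) = (b + a / u ^ 2) • f (b * u - a / u) :=
  fun u _ => by rw [abs_of_pos (by positivity)]

theorem integral_eq_setIntegral_Ioi_mul_sub_div (f : ℝ → E) {a b : ℝ} (ha : 0 < a)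
    (hb : 0 < b) :
    ∫ w, f w = ∫ u in Ioi 0, (b + a / u ^ 2) • f (b * u - a / u) := by
  rw [← setIntegral_univ, ← image_mul_sub_div_Ioi_zero ha hb,
    integral_image_eq_integral_abs_deriv_smul measurableSet_Ioi (hasDerivWithinAt_mul_sub_div a b)
      (strictMonoOn_mul_sub_div ha.le hb).injOn f]
  exact setIntegral_congr_fun measurableSet_Ioi (abs_deriv_mul_sub_div_smul ha.le hb f)

theorem MeasureTheory.Integrable.integrableOn_Ioi_comp_mul_sub_div {f : ℝ → E} {a b : ℝ}
    (hf : Integrable f) (ha : 0 < a) (hb : 0 < b) :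
    IntegrableOn (fun u => f (b * u - a / u)) (Ioi 0) := by
  have hF : IntegrableOn (fun u => (b + a / u ^ 2) • f (b * u - a / u)) (Ioi 0) := by
    refine (integrableOn_congr_fun (abs_deriv_mul_sub_div_smul ha.le hb f) measurableSet_Ioi).mp ?_
    rw [← integrableOn_image_iff_integrableOn_abs_deriv_smul measurableSet_Ioi
      (hasDerivWithinAt_mul_sub_div a b) (strictMonoOn_mul_sub_div ha.le hb).injOn,
      image_mul_sub_div_Ioi_zero ha hb, integrableOn_univ]
    exact hf
  have hw : ∀ u ∈ Ioi (0 : ℝ), f (b * u - a / u)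
      = (b + a / u ^ 2)⁻¹ • ((b + a / u ^ 2) • f (b * u - a / u)) :=
    fun u _ => by rw [smul_smul, inv_mul_cancel₀ (by positivity), one_smul]
  refine (integrableOn_congr_fun hw measurableSet_Ioi).mpr (hF.bdd_smul b⁻¹ ?_ ?_)
  · refine (ContinuousOn.inv₀ ?_ fun u hu => ?_).aestronglyMeasurable measurableSet_Ioi
    · exact continuousOn_const.add (continuousOn_const.div (continuous_pow 2).continuousOn
        fun u hu => pow_ne_zero 2 (ne_of_gt hu))
    · have := mem_Ioi.mp hu
      positivity
  · filter_upwards [ae_restrict_mem measurableSet_Ioi] with u hu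
    have hu := mem_Ioi.mp hu
    rw [norm_inv, Real.norm_of_nonneg (by positivity)]
    exact inv_anti₀ hb (le_add_of_nonneg_right (by positivity))

theorem integral_Ioi_comp_mul_sub_div_of_even_of_pos {f : ℝ → E} {a b : ℝ} (hf : Integrable f)
    (heven : f.Even) (ha : 0 < a) (hb : 0 < b) :
    ∫ u in Ioi 0, f (b * u - a / u) = (2 * b)⁻¹ • ∫ w, f w := by
  set g := fun u => f (b * u - a / u)
  have hg : IntegrableOn g (Ioi 0) := hf.integrableOn_Ioi_comp_mul_sub_div ha hb
  have hrefl : ∀ u ∈ Ioi (0 : ℝ),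
      (a / b / u ^ 2) • g (a / b / u) = (a / b / u ^ 2) • g u := by
    intro u hu
    have hu : u ≠ 0 := ne_of_gt hu
    have : b * (a / b / u) - a / (a / b / u) = -(b * u - a / u) := by field_simp; ring
    simp only [g, this, heven _]
  have hg_eq : ∫ u in Ioi 0, g u = ∫ u in Ioi 0, (a / b / u ^ 2) • g u := by
    rw [← integral_Ioi_comp_div g (div_pos ha hb)]
    exact setIntegral_congr_fun measurableSet_Ioi hrefl
  have hg' : IntegrableOn (fun u => (a / b / u ^ 2) • g u) (Ioi 0) :=
    (integrableOn_congr_fun hrefl measurableSet_Ioi).mp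
      ((integrableOn_Ioi_comp_div_iff g (div_pos ha hb)).mpr hg)
  have hsplit : ∀ u ∈ Ioi (0 : ℝ),
      (b + a / u ^ 2) • g u = b • g u + b • ((a / b / u ^ 2) • g u) := by
    intro u _
    rw [smul_smul, ← add_smul]
    field_simp
  rw [integral_eq_setIntegral_Ioi_mul_sub_div f ha hb,
    setIntegral_congr_fun measurableSet_Ioi hsplit,
    integral_add (f := fun u => b • g u) (g := fun u => b • (a / b / u ^ 2) • g u)
      (hg.smul b) (hg'.smul b),
    integral_smul, integral_smul, ← hg_eq, ← add_smul, smul_smul]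
  field_simp
  norm_num

theorem integral_Ioi_comp_mul_sub_div_of_even {f : ℝ → E} {a b : ℝ} (hf : Integrable f)
    (heven : f.Even) (ha : 0 ≤ a) (hb : 0 < b) :
    ∫ u in Ioi 0, f (b * u - a / u) = (2 * b)⁻¹ • ∫ w, f w := by
  rcases ha.eq_or_lt with rfl | ha
  · simp only [zero_div, sub_zero]
    rw [integral_comp_mul_left_Ioi f 0 hb, mul_zero, heven.setIntegral_Ioi_zero hf, smul_smul,
      mul_inv, mul_comm]
  · exact integral_Ioi_comp_mul_sub_div_of_even_of_pos hf heven ha hb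

end ChangeOfVariables

theorem integral_Ioi_exp_neg_div_sq_sub_mul_sq {a b : ℝ} (ha : 0 ≤ a) (hb : 0 < b) :
    ∫ u in Ioi 0, exp (-(a ^ 2 / (2 * u ^ 2)) - b ^ 2 * u ^ 2 / 2)
      = √(2 * π) / (2 * b) * exp (-(a * b)) := by
  have hsq : ∀ u ∈ Ioi (0 : ℝ), exp (-(a ^ 2 / (2 * u ^ 2)) - b ^ 2 * u ^ 2 / 2)
      = exp (-(a * b)) * exp (-(1 / 2) * (b * u - a / u) ^ 2) := by
    intro u hu
    have hu : u ≠ 0 := ne_of_gt hu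
    rw [← exp_add]
    congr 1
    field_simp
    ring
  have hgauss : ∫ w, exp (-(1 / 2) * w ^ 2) = √(2 * π) := by
    rw [integral_gaussian]
    congr 1
    field_simp
  rw [setIntegral_congr_fun measurableSet_Ioi hsq, integral_const_mul,
    integral_Ioi_comp_mul_sub_div_of_even (f := fun w => exp (-(1 / 2) * w ^ 2))
      (integrable_exp_neg_mul_sq (by norm_num)) (fun w => by simp only [neg_sq]) ha hb,
    hgauss, smul_eq_mul]
  field_simp

theorem integral_Ioi_inv_sqrt_mul_exp_neg_div_sub_mul {a b : ℝ} (ha : 0 ≤ a) (hb : 0 < b) :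
    ∫ ν in Ioi 0, (√ν)⁻¹ * exp (-(a ^ 2 / (2 * ν)) - b ^ 2 * ν / 2)
      = √(2 * π) / b * exp (-(a * b)) := by
  have hsub : ∀ u ∈ Ioi (0 : ℝ),
      (|(2 : ℝ)| * u ^ ((2 : ℝ) - 1)) • ((√(u ^ (2 : ℝ)))⁻¹
        * exp (-(a ^ 2 / (2 * u ^ (2 : ℝ))) - b ^ 2 * u ^ (2 : ℝ) / 2))
      = 2 * exp (-(a ^ 2 / (2 * u ^ 2)) - b ^ 2 * u ^ 2 / 2) := by
    intro u hu
    have hu : 0 < u := hu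
    norm_num [rpow_two, sqrt_sq hu.le]
    field_simp
  rw [← integral_comp_rpow_Ioi _ two_ne_zero, setIntegral_congr_fun measurableSet_Ioi hsub,
    integral_const_mul, integral_Ioi_exp_neg_div_sq_sub_mul_sq ha hb]
  field_simp

theorem normalPdf_mul_exp_neg {x μ κ α ν : ℝ} (hν : 0 < ν) :
    normalPdf x (μ + κ * ν) ν * exp (-((α ^ 2 - κ ^ 2) / 2) * ν)
      = exp (κ * (x - μ)) / √(2 * π)
        * ((√ν)⁻¹ * exp (-((x - μ) ^ 2 / (2 * ν)) - α ^ 2 * ν / 2)) := by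
  have hexp : -(x - (μ + κ * ν)) ^ 2 / (2 * ν) + -((α ^ 2 - κ ^ 2) / 2) * ν
      = κ * (x - μ) + (-((x - μ) ^ 2 / (2 * ν)) - α ^ 2 * ν / 2) := by
    field_simp
    ring
  rw [normalPdf, sqrt_mul (by positivity) ν, mul_assoc, ← exp_add, hexp, exp_add]
  field_simp

theorem asymmetric_laplace_mixture (α κ x μ : ℝ) (hκ : 0 ≤ κ) (h : κ < α) :
    ((α ^ 2 - κ ^ 2) / (2 * α)) * Real.exp (-α * |x - μ| + κ * (x - μ))
      = ∫ ν in Ioi (0 : ℝ),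
          normalPdf x (μ + κ * ν) ν *
            (((α ^ 2 - κ ^ 2) / 2) * Real.exp (-((α ^ 2 - κ ^ 2) / 2) * ν)) := by
  have hα : 0 < α := hκ.trans_lt h
  have hmix : ∀ ν ∈ Ioi (0 : ℝ), normalPdf x (μ + κ * ν) ν
        * (((α ^ 2 - κ ^ 2) / 2) * exp (-((α ^ 2 - κ ^ 2) / 2) * ν))
        = (α ^ 2 - κ ^ 2) / 2 * exp (κ * (x - μ)) / √(2 * π)
          * ((√ν)⁻¹ * exp (-(|x - μ| ^ 2 / (2 * ν)) - α ^ 2 * ν / 2)) := by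
    intro ν hν
    rw [mul_left_comm, normalPdf_mul_exp_neg hν, sq_abs]
    ring
  rw [setIntegral_congr_fun measurableSet_Ioi hmix, integral_const_mul,
    integral_Ioi_inv_sqrt_mul_exp_neg_div_sub_mul (abs_nonneg _) hα,
    show -α * |x - μ| + κ * (x - μ) = κ * (x - μ) + -(|x - μ| * α) by ring, exp_add]
  field_simp
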